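/- arXiv:0906.1234 — 2 statements merged into one kernel-verified Lean document; each statement's English description precedes it below -/
import Mathlib

section
/- Let d ≥ 1 be an integer, α ∈ (0,2), and a > 0. Set s := max(1, a) and t₀ := s^α (so t₀ ≥ 1 and s = t₀^{1/α}). Let D ⊆ ℝ^d be an open set with H_a ⊆ D ⊆ H_0. Then there exists a constant c > 0, depending only on α and a, such that for every x ∈ D and every real t > 5^α t₀, writing x₀ := x + 2s·e_d where e_d is the d-th standard basis vector, one has c⁻¹ · (min(1, δ_D(x)^α)) · (min(1, δ_{H_0}(x₀)^α / t)) ≤ min(1, δ_D(x)^α / t) ≤ c · (min(1, δ_D(x)^α)) · (min(1, δ_{H_a}(x₀)^α / t)). -/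
/-!
Because `H_a ⊆ D ⊆ H_0`, the distance `δ = δ_D(x)` is squeezed between `x_d - a` and `x_d`,
while `x₀` sits at height `x_d + 2s`. Hence `δ_{H_0}(x₀) = x_d + 2s ≤ 4s · max(1, δ)` and
`δ_{H_a}(x₀) = x_d + 2s - a ≥ max(1, δ)`, and both inequalities reduce to elementary facts
about `min(1, ·)` with `c = (4s)^α`.
-/

open Metric

/-- The open half-space `{x ∈ ℝ^d : x_d > a}`. -/
def halfSpace (d : ℕ) (hd : 0 < d) (a : ℝ) : Set (EuclideanSpace ℝ (Fin d)) :=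
  {x | a < x ⟨d - 1, Nat.sub_lt hd one_pos⟩}

section HalfSpace

variable {d : ℕ} (hd : 0 < d)

local notation "e" => Fin.mk (d - 1) (Nat.sub_lt hd one_pos)

lemma halfSpace_compl_nonempty (b : ℝ) : (halfSpace d hd b)ᶜ.Nonempty :=
  ⟨(b - 1) • EuclideanSpace.single e 1, by simp [halfSpace]⟩

lemma sub_le_infDist_compl_halfSpace (b : ℝ) (z : EuclideanSpace ℝ (Fin d)) :
    z e - b ≤ infDist z (halfSpace d hd b)ᶜ := by
  refine (le_infDist (halfSpace_compl_nonempty hd b)).2 fun y hy => ?_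
  have hyb : y e ≤ b := not_lt.1 hy
  calc z e - b ≤ |z e - y e| := by linarith [le_abs_self (z e - y e)]
    _ ≤ dist z y := by simpa only [Real.dist_eq] using PiLp.dist_apply_le z y e

lemma infDist_compl_halfSpace {b : ℝ} {z : EuclideanSpace ℝ (Fin d)} (hz : b ≤ z e) :
    infDist z (halfSpace d hd b)ᶜ = z e - b := by
  refine le_antisymm ?_ (sub_le_infDist_compl_halfSpace hd b z)
  set p := z - (z e - b) • EuclideanSpace.single e (1 : ℝ)
  have hp : p ∈ (halfSpace d hd b)ᶜ := by simp [p, halfSpace]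
  calc infDist z (halfSpace d hd b)ᶜ ≤ dist z p := infDist_le_dist_of_mem hp
    _ = z e - b := by simp [p, norm_smul, abs_of_nonneg (sub_nonneg.2 hz)]

variable {D : Set (EuclideanSpace ℝ (Fin d))}

lemma infDist_compl_le_of_subset_halfSpace {b : ℝ} (hD : D ⊆ halfSpace d hd b)
    {z : EuclideanSpace ℝ (Fin d)} (hz : b ≤ z e) : infDist z Dᶜ ≤ z e - b := by
  rw [← infDist_compl_halfSpace hd hz]
  exact infDist_le_infDist_of_subset (Set.compl_subset_compl.2 hD) (halfSpace_compl_nonempty hd b)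

lemma sub_le_infDist_compl_of_halfSpace_subset {a : ℝ} (hD : halfSpace d hd a ⊆ D)
    (hDc : Dᶜ.Nonempty) (z : EuclideanSpace ℝ (Fin d)) : z e - a ≤ infDist z Dᶜ :=
  (sub_le_infDist_compl_halfSpace hd a z).trans
    (infDist_le_infDist_of_subset (Set.compl_subset_compl.2 hD) hDc)

end HalfSpace

lemma inv_mul_min_one_mul_min_one_div_le {u n c t : ℝ} (hu : 0 ≤ u) (hc : 1 ≤ c) (ht : 0 < t)
    (hn : n ≤ c * max 1 u) : c⁻¹ * min 1 u * min 1 (n / t) ≤ min 1 (u / t) := by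
  have hc0 : 0 < c := by linarith
  have hmin : 0 ≤ c⁻¹ * min 1 u := by positivity
  refine le_min ?_ ?_
  · calc c⁻¹ * min 1 u * min 1 (n / t) ≤ c⁻¹ * min 1 u :=
          mul_le_of_le_one_right hmin (min_le_left _ _)
      _ ≤ 1 := mul_le_one₀ (inv_le_one_of_one_le₀ hc) (le_min zero_le_one hu) (min_le_left _ _)
  · calc c⁻¹ * min 1 u * min 1 (n / t) ≤ c⁻¹ * min 1 u * (c * max 1 u / t) := by
          gcongr
          exact (min_le_right _ _).trans (by gcongr)
      _ = min 1 u * max 1 u / t := by field_simp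
      _ = u / t := by rw [min_mul_max, one_mul]

lemma min_one_div_le_mul_min_one_mul_min_one_div {u m c t : ℝ} (hu : 0 ≤ u) (hc : 1 ≤ c)
    (ht : 1 ≤ t) (hm : 1 ≤ m) (hum : u ≤ m) : min 1 (u / t) ≤ c * min 1 u * min 1 (m / t) := by
  have key : min 1 (u / t) ≤ min 1 u * min 1 (m / t) := by
    rcases le_total u 1 with h | h
    · rw [min_eq_right h, mul_min_of_nonneg _ _ hu, mul_one, ← mul_div_assoc]
      calc min 1 (u / t) ≤ u / t := min_le_right _ _
        _ ≤ min u (u * m / t) :=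
            le_min (div_le_self hu ht) (by gcongr; exact le_mul_of_one_le_right hu hm)
    · rw [min_eq_left h, one_mul]
      gcongr
  rw [mul_assoc]
  exact key.trans (le_mul_of_one_le_left (by positivity) hc)

lemma rpow_le_rpow_mul_max_one_rpow {y c u α : ℝ} (hy : 0 ≤ y) (hc : 0 ≤ c) (hu : 0 ≤ u)
    (hα : 0 ≤ α) (h : y ≤ c * max 1 u) : y ^ α ≤ c ^ α * max 1 (u ^ α) :=
  calc y ^ α ≤ (c * max 1 u) ^ α := by gcongr
    _ = c ^ α * max 1 (u ^ α) := by
        rw [Real.mul_rpow hc (by positivity), Real.rpow_max zero_le_one hu hα, Real.one_rpow]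

theorem statement0_general (d : ℕ) (hd : 0 < d) (α a : ℝ) (hα0 : 0 < α)
    (D : Set (EuclideanSpace ℝ (Fin d)))
    (hDa : halfSpace d hd a ⊆ D) (hD0 : D ⊆ halfSpace d hd 0) :
    ∃ c : ℝ, 0 < c ∧ ∀ x ∈ D, ∀ t : ℝ, 5 ^ α * (max 1 a) ^ α < t →
      (c⁻¹ * min 1 (infDist x Dᶜ ^ α) *
          min 1 (infDist
              (x + (2 * max 1 a) •
                EuclideanSpace.single (⟨d - 1, Nat.sub_lt hd one_pos⟩ : Fin d) (1 : ℝ))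
              (halfSpace d hd 0)ᶜ ^ α / t)
        ≤ min 1 (infDist x Dᶜ ^ α / t)) ∧
      (min 1 (infDist x Dᶜ ^ α / t)
        ≤ c * min 1 (infDist x Dᶜ ^ α) *
          min 1 (infDist
              (x + (2 * max 1 a) •
                EuclideanSpace.single (⟨d - 1, Nat.sub_lt hd one_pos⟩ : Fin d) (1 : ℝ))
              (halfSpace d hd a)ᶜ ^ α / t)) := by
  set s := max 1 a
  set i : Fin d := ⟨d - 1, Nat.sub_lt hd one_pos⟩
  have hs1 : 1 ≤ s := le_max_left _ _
  have hsa : a ≤ s := le_max_right _ _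
  refine ⟨(4 * s) ^ α, by positivity, fun x hx t ht => ?_⟩
  have hxi : 0 < x i := hD0 hx
  have hx₀i : (x + (2 * s) • EuclideanSpace.single i (1 : ℝ)) i = x i + 2 * s := by simp
  rw [infDist_compl_halfSpace hd (by rw [hx₀i]; linarith),
    infDist_compl_halfSpace hd (by rw [hx₀i]; linarith), hx₀i]
  set δ := infDist x Dᶜ
  have hδ0 : 0 ≤ δ := infDist_nonneg
  have hδx : δ ≤ x i := by simpa using infDist_compl_le_of_subset_halfSpace hd hD0 hxi.le
  have hxδ : x i - a ≤ δ := sub_le_infDist_compl_of_halfSpace_subset hd hDa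
    ((halfSpace_compl_nonempty hd 0).mono (Set.compl_subset_compl.2 hD0)) x
  have ht1 : 1 ≤ t := (one_le_mul_of_one_le_of_one_le (Real.one_le_rpow (by norm_num) hα0.le)
    (Real.one_le_rpow hs1 hα0.le)).trans ht.le
  have hc : 1 ≤ (4 * s) ^ α := Real.one_le_rpow (by linarith) hα0.le
  refine ⟨inv_mul_min_one_mul_min_one_div_le (by positivity) hc (by linarith) ?_, ?_⟩
  · exact rpow_le_rpow_mul_max_one_rpow (by linarith) (by linarith) hδ0 hα0.le
      (by nlinarith [le_max_left 1 δ, le_max_right 1 δ])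
  · exact min_one_div_le_mul_min_one_mul_min_one_div (by positivity) hc ht1
      (Real.one_le_rpow (by linarith) hα0.le) (by gcongr; linarith)

/-- for `D` open with `H_a ⊆ D ⊆ H_0`, `s = max 1 a`, `t₀ = s^α`, there is `c > 0`
such that for `x ∈ D`, `t > 5^α t₀` and `x₀ = x + 2s e_d`,
`c⁻¹ (1 ∧ δ_D(x)^α)(1 ∧ δ_{H_0}(x₀)^α/t) ≤ 1 ∧ δ_D(x)^α/t
  ≤ c (1 ∧ δ_D(x)^α)(1 ∧ δ_{H_a}(x₀)^α/t)`. -/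
theorem statement0 (d : ℕ) (hd : 0 < d) (α a : ℝ) (hα0 : 0 < α) (hα2 : α < 2) (ha : 0 < a)
    (D : Set (EuclideanSpace ℝ (Fin d))) (hDopen : IsOpen D)
    (hDa : halfSpace d hd a ⊆ D) (hD0 : D ⊆ halfSpace d hd 0) :
    ∃ c : ℝ, 0 < c ∧ ∀ x ∈ D, ∀ t : ℝ, 5 ^ α * (max 1 a) ^ α < t →
      (c⁻¹ * min 1 (infDist x Dᶜ ^ α) *
          min 1 (infDist
              (x + (2 * max 1 a) •
                EuclideanSpace.single (⟨d - 1, Nat.sub_lt hd one_pos⟩ : Fin d) (1 : ℝ))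
              (halfSpace d hd 0)ᶜ ^ α / t)
        ≤ min 1 (infDist x Dᶜ ^ α / t)) ∧
      (min 1 (infDist x Dᶜ ^ α / t)
        ≤ c * min 1 (infDist x Dᶜ ^ α) *
          min 1 (infDist
              (x + (2 * max 1 a) •
                EuclideanSpace.single (⟨d - 1, Nat.sub_lt hd one_pos⟩ : Fin d) (1 : ℝ))
              (halfSpace d hd a)ᶜ ^ α / t)) :=
  statement0_general d hd α a hα0 D hDa hD0
end

section
/- Let d ≥ 1 be an integer and a > 0. Set s := max(1, a). Let D ⊆ ℝ^d be an open set with H_a ⊆ D ⊆ H_0. Then for every x ∈ D, writing x₀ := x + 2s·e_d where e_d is the d-th standard basis vector, one has δ_D(x) + s ≤ δ_{H_a}(x₀) ≤ δ_D(x) + 2s and δ_D(x) + 2s ≤ δ_{H_0}(x₀) ≤ δ_D(x) + 3s. -/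
/-!
For `y_d ≥ b`, the distance from `y` to the complement of `H_b` is exactly `y_d - b`: a coordinate
is 1-Lipschitz, and the vertical projection of `y` onto `{z_d = b}` attains the bound. Monotonicity
of `infDist` in the set turns `H_a ⊆ D ⊆ H_0` into `x_d - a ≤ δ_D(x) ≤ x_d`, while `x₀` has height
`x_d + 2s` with `s ≥ a`, so all four inequalities are linear consequences.
-/

open Metric

namespace EuclideanSpace

variable {ι : Type*} (i : ι) (b : ℝ)

lemma compl_setOf_lt_apply_nonempty [DecidableEq ι] :
    ({z : EuclideanSpace ℝ ι | b < z i}ᶜ).Nonempty :=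
  ⟨single i b, by simp⟩

lemma sub_le_infDist_compl_setOf_lt_apply [Fintype ι] (y : EuclideanSpace ℝ ι) :
    y i - b ≤ infDist y {z | b < z i}ᶜ := by
  classical
  refine (le_infDist (compl_setOf_lt_apply_nonempty i b)).2 fun z hz => ?_
  have hzi : z i ≤ b := not_lt.1 hz
  calc y i - b ≤ dist (y i) (z i) := by rw [Real.dist_eq]; linarith [le_abs_self (y i - z i)]
    _ ≤ dist y z := PiLp.dist_apply_le y z i

lemma infDist_compl_setOf_lt_apply [Fintype ι] {y : EuclideanSpace ℝ ι} (hy : b ≤ y i) :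
    infDist y {z | b < z i}ᶜ = y i - b := by
  classical
  refine le_antisymm ?_ (sub_le_infDist_compl_setOf_lt_apply i b y)
  have hproj : y - (y i - b) • single i 1 ∈ {z : EuclideanSpace ℝ ι | b < z i}ᶜ := by
    simp
  calc infDist y {z | b < z i}ᶜ ≤ dist y (y - (y i - b) • single i 1) :=
        infDist_le_dist_of_mem hproj
    _ = y i - b := by
        rw [dist_eq_norm, sub_sub_cancel, norm_smul]
        simp [abs_of_nonneg (sub_nonneg.2 hy)]

end EuclideanSpace

theorem statement1_general (d : ℕ) (hd : 0 < d) (a : ℝ)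
    (D : Set (EuclideanSpace ℝ (Fin d)))
    (hDa : halfSpace d hd a ⊆ D) (hD0 : D ⊆ halfSpace d hd 0) :
    ∀ x ∈ D,
      (infDist x Dᶜ + max 1 a
          ≤ infDist
              (x + (2 * max 1 a) •
                EuclideanSpace.single (⟨d - 1, Nat.sub_lt hd one_pos⟩ : Fin d) (1 : ℝ))
              (halfSpace d hd a)ᶜ ∧
        infDist
            (x + (2 * max 1 a) •
              EuclideanSpace.single (⟨d - 1, Nat.sub_lt hd one_pos⟩ : Fin d) (1 : ℝ))
            (halfSpace d hd a)ᶜ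
          ≤ infDist x Dᶜ + 2 * max 1 a) ∧
      (infDist x Dᶜ + 2 * max 1 a
          ≤ infDist
              (x + (2 * max 1 a) •
                EuclideanSpace.single (⟨d - 1, Nat.sub_lt hd one_pos⟩ : Fin d) (1 : ℝ))
              (halfSpace d hd 0)ᶜ ∧
        infDist
            (x + (2 * max 1 a) •
              EuclideanSpace.single (⟨d - 1, Nat.sub_lt hd one_pos⟩ : Fin d) (1 : ℝ))
            (halfSpace d hd 0)ᶜ
          ≤ infDist x Dᶜ + 3 * max 1 a) := by
  intro x hx
  set e : Fin d := ⟨d - 1, Nat.sub_lt hd one_pos⟩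
  set s := max 1 a
  set x₀ := x + (2 * s) • EuclideanSpace.single e (1 : ℝ)
  have hs1 : 1 ≤ s := le_max_left 1 a
  have hsa : a ≤ s := le_max_right 1 a
  have hxe : 0 < x e := hD0 hx
  have hx₀e : x₀ e = x e + 2 * s := by simp [x₀]
  have hH0 : (halfSpace d hd 0)ᶜ.Nonempty := EuclideanSpace.compl_setOf_lt_apply_nonempty e 0
  have hD_le : infDist x Dᶜ ≤ x e := by
    have h := infDist_le_infDist_of_subset (x := x) (Set.compl_subset_compl.2 hD0) hH0
    rwa [halfSpace, EuclideanSpace.infDist_compl_setOf_lt_apply e 0 hxe.le, sub_zero] at h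
  have hD_ge : x e - a ≤ infDist x Dᶜ :=
    (EuclideanSpace.sub_le_infDist_compl_setOf_lt_apply e a x).trans <|
      infDist_le_infDist_of_subset (Set.compl_subset_compl.2 hDa)
        (hH0.mono (Set.compl_subset_compl.2 hD0))
  have hx₀a : infDist x₀ (halfSpace d hd a)ᶜ = x e + 2 * s - a := by
    rw [halfSpace, EuclideanSpace.infDist_compl_setOf_lt_apply e a (by linarith), hx₀e]
  have hx₀0 : infDist x₀ (halfSpace d hd 0)ᶜ = x e + 2 * s := by
    rw [halfSpace, EuclideanSpace.infDist_compl_setOf_lt_apply e 0 (by linarith), hx₀e, sub_zero]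
  rw [hx₀a, hx₀0]
  refine ⟨⟨?_, ?_⟩, ?_, ?_⟩ <;> linarith

/-- for `D` open with `H_a ⊆ D ⊆ H_0`, `s = max 1 a`, `x ∈ D`, and
`x₀ := x + 2s e_d`, one has `δ_D(x) + s ≤ δ_{H_a}(x₀) ≤ δ_D(x) + 2s` and
`δ_D(x) + 2s ≤ δ_{H_0}(x₀) ≤ δ_D(x) + 3s`. -/
theorem statement1 (d : ℕ) (hd : 0 < d) (a : ℝ) (ha : 0 < a)
    (D : Set (EuclideanSpace ℝ (Fin d))) (hDopen : IsOpen D)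
    (hDa : halfSpace d hd a ⊆ D) (hD0 : D ⊆ halfSpace d hd 0) :
    ∀ x ∈ D,
      (infDist x Dᶜ + max 1 a
          ≤ infDist
              (x + (2 * max 1 a) •
                EuclideanSpace.single (⟨d - 1, Nat.sub_lt hd one_pos⟩ : Fin d) (1 : ℝ))
              (halfSpace d hd a)ᶜ ∧
        infDist
            (x + (2 * max 1 a) •
              EuclideanSpace.single (⟨d - 1, Nat.sub_lt hd one_pos⟩ : Fin d) (1 : ℝ))
            (halfSpace d hd a)ᶜ
          ≤ infDist x Dᶜ + 2 * max 1 a) ∧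
      (infDist x Dᶜ + 2 * max 1 a
          ≤ infDist
              (x + (2 * max 1 a) •
                EuclideanSpace.single (⟨d - 1, Nat.sub_lt hd one_pos⟩ : Fin d) (1 : ℝ))
              (halfSpace d hd 0)ᶜ ∧
        infDist
            (x + (2 * max 1 a) •
              EuclideanSpace.single (⟨d - 1, Nat.sub_lt hd one_pos⟩ : Fin d) (1 : ℝ))
            (halfSpace d hd 0)ᶜ
          ≤ infDist x Dᶜ + 3 * max 1 a) :=
  statement1_general d hd a D hDa hD0
end
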